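/- arXiv:math/0303016 — 5 statements merged into one kernel-verified Lean document; each statement's English description precedes it below -/
import Mathlib

section
/- There exists an R-bilinear map B : Ω[A⁄R] × Ω[A⁄R] → Ω[A⁄R] satisfying B(a • D u, b • D v) = a{u, b} • D v + b{a, v} • D u + (ab) • D{u, v} for all a, b, u, v ∈ A. -/
/-!
With `H : Ω[A⁄R] →ₗ[A] Der_R(A)` the anchor `a • D u ↦ a • {u, ·}` of the Poisson bracket, the
bracket is the Koszul bracket `B(α, β) = L_{Hα} β - L_{Hβ} α - D ⟨Hα, β⟩`, which is `R`-bilinear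
because each term is. The Lie derivative `L_X (a • D u) = a • D (X u) + X a • D u` is well defined
because `u ↦ (D u, D (X u))` is a derivation into the module of first-order jets along `X`.
-/

open KaehlerDifferential

section Jet

variable {R A : Type*} [CommRing R] [CommRing A] [Algebra R A]
variable {M : Type*} [AddCommGroup M] [Module A M] [Module R M] [IsScalarTower R A M]

def Derivation.jetAction (X : Derivation R A A) : A →+* Module.End R (M × M) where
  toFun a :=
    { toFun p := (a • p.1, a • p.2 + X a • p.1)
      map_add' p q := by ext <;> simp only [Prod.fst_add, Prod.snd_add, smul_add]; abel
      map_smul' r p := by ext <;> simp [smul_comm r] }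
  map_one' := by ext p <;> simp
  map_mul' a b := by
    ext p <;> simp [Derivation.leibniz, mul_smul, add_smul, add_comm, smul_comm b (X a)]
  map_zero' := by ext p <;> simp
  map_add' a b := by ext p <;> simp [add_smul]

/-- `M × M` with `a • (m, n) = (a • m, a • n + X a • m)`, i.e. `A[ε] ⊗[A] M` with `A` acting
through `a ↦ a + ε X a`. -/
def JetModule (_X : Derivation R A A) (M : Type*) : Type _ := M × M

namespace JetModule

variable (X : Derivation R A A) (M)

instance : AddCommGroup (JetModule X M) := inferInstanceAs (AddCommGroup (M × M))

instance : Module R (JetModule X M) := inferInstanceAs (Module R (M × M))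

instance : Module A (JetModule X M) :=
  letI : Module (Module.End R (M × M)) (JetModule X M) := Module.End.applyModule
  Module.compHom _ (X.jetAction (M := M))

variable {X M}

instance : IsScalarTower R A (JetModule X M) where
  smul_assoc r a p := by
    show ((r • a) • p.1, (r • a) • p.2 + X (r • a) • p.1)
      = (r • a • p.1, r • (a • p.2 + X a • p.1))
    simp [smul_add]

def snd : JetModule X M →ₗ[R] M where
  toFun p := p.2
  map_add' _ _ := rfl
  map_smul' _ _ := rfl

end JetModule

def Derivation.jet (X : Derivation R A A) (d : Derivation R A M) :
    Derivation R A (JetModule X M) :=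
  Derivation.mk'
    { toFun u := ((d u, d (X u)) : M × M)
      map_add' u v := by simp only [map_add]; rfl
      map_smul' r u := by simp only [map_smul]; rfl }
    fun u v => by
      show ((d (u * v), d (X (u * v))) : M × M)
        = (u • d v, u • d (X v) + X u • d v) + (v • d u, v • d (X u) + X v • d u)
      simp only [Derivation.leibniz, smul_eq_mul, map_add, Prod.mk_add_mk]
      congr 1
      abel

end Jet

section LieDerivative

variable {R A : Type*} [CommRing R] [CommRing A] [Algebra R A]

theorem KaehlerDifferential.linearMap_ext_smul_D {N : Type*} [AddCommGroup N] [Module R N]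
    {f g : Ω[A⁄R] →ₗ[R] N} (h : ∀ a b : A, f (a • D R A b) = g (a • D R A b)) : f = g := by
  refine LinearMap.ext fun x => ?_
  obtain ⟨y, rfl⟩ := linearCombination_surjective R A x
  induction y using Finsupp.induction_linear with
  | zero => simp
  | add y z hy hz => simp only [map_add, hy, hz]
  | single b a => simpa using h a b

noncomputable def Derivation.lieDerivative (X : Derivation R A A) : Ω[A⁄R] →ₗ[R] Ω[A⁄R] :=
  JetModule.snd ∘ₗ (X.jet (D R A)).liftKaehlerDifferential.restrictScalars R

theorem Derivation.lieDerivative_smul_D (X : Derivation R A A) (a u : A) :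
    X.lieDerivative (a • D R A u) = a • D R A (X u) + X a • D R A u := by
  rw [lieDerivative, LinearMap.comp_apply, LinearMap.restrictScalars_apply, LinearMap.map_smul,
    liftKaehlerDifferential_comp_D]
  rfl

theorem Derivation.lieDerivative_add (X Y : Derivation R A A) :
    (X + Y).lieDerivative = X.lieDerivative + Y.lieDerivative :=
  linearMap_ext_smul_D fun a u => by
    simp only [LinearMap.add_apply, lieDerivative_smul_D, add_apply, map_add, smul_add, add_smul]
    abel

theorem Derivation.lieDerivative_smul (r : R) (X : Derivation R A A) :
    (r • X).lieDerivative = r • X.lieDerivative :=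
  linearMap_ext_smul_D fun a u => by
    simp only [LinearMap.smul_apply, lieDerivative_smul_D, smul_apply, map_smul, smul_add,
      smul_comm a r, smul_assoc]

end LieDerivative

section KoszulBracket

variable {R A : Type*} [CommRing R] [CommRing A] [Algebra R A]

noncomputable def koszulBracket (H : Ω[A⁄R] →ₗ[A] Derivation R A A) :
    Ω[A⁄R] →ₗ[R] Ω[A⁄R] →ₗ[R] Ω[A⁄R] :=
  let π := (linearMapEquivDerivation R A).symm.toLinearMap ∘ₗ H
  LinearMap.mk₂ R (fun α β => (H α).lieDerivative β - (H β).lieDerivative α - D R A (π α β))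
    (fun α α' β => by
      simp only [map_add, Derivation.lieDerivative_add, LinearMap.add_apply]
      abel)
    (fun r α β => by
      simp only [LinearMap.map_smul_of_tower, Derivation.lieDerivative_smul, LinearMap.smul_apply,
        Derivation.map_smul, smul_sub])
    (fun α β β' => by
      simp only [map_add, Derivation.lieDerivative_add, LinearMap.add_apply]
      abel)
    (fun r α β => by
      simp only [LinearMap.map_smul_of_tower, Derivation.lieDerivative_smul, LinearMap.smul_apply,
        Derivation.map_smul, smul_sub])

theorem koszulBracket_apply (H : Ω[A⁄R] →ₗ[A] Derivation R A A) (α β : Ω[A⁄R]) :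
    koszulBracket H α β = (H α).lieDerivative β - (H β).lieDerivative α
      - D R A ((H α).liftKaehlerDifferential β) := rfl

end KoszulBracket

section Poisson

variable {R A : Type*} [CommRing R] [CommRing A] [Algebra R A] (P : A →ₗ[R] A →ₗ[R] A)
  (hP_leibniz : ∀ u a b : A, P u (a * b) = P u a * b + a * P u b)
  (hP_antisymm : ∀ u v : A, P u v = -P v u)

def hamiltonian (u : A) : Derivation R A A :=
  Derivation.mk' (P u) fun a b => by rw [hP_leibniz, smul_eq_mul, smul_eq_mul]; ring

@[simp]
theorem hamiltonian_apply (u v : A) : hamiltonian P hP_leibniz u v = P u v := rfl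

def hamiltonianDerivation : Derivation R A (Derivation R A A) :=
  Derivation.mk'
    { toFun := hamiltonian P hP_leibniz
      map_add' u v := by ext; simp [hamiltonian]
      map_smul' r u := by ext; simp [hamiltonian] }
    fun u v => by
      ext b
      show P (u * v) b = u * P v b + v * P u b
      linear_combination hP_antisymm (u * v) b - hP_leibniz b u v - v * hP_antisymm b u
        - u * hP_antisymm b v

noncomputable def poissonAnchor : Ω[A⁄R] →ₗ[A] Derivation R A A :=
  (hamiltonianDerivation P hP_leibniz hP_antisymm).liftKaehlerDifferential

theorem poissonAnchor_smul_D (a u : A) :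
    poissonAnchor P hP_leibniz hP_antisymm (a • D R A u) = a • hamiltonian P hP_leibniz u := by
  rw [poissonAnchor, map_smul, Derivation.liftKaehlerDifferential_comp_D]
  rfl

theorem koszulBracket_poissonAnchor_smul_D_smul_D (a b u v : A) :
    koszulBracket (poissonAnchor P hP_leibniz hP_antisymm) (a • D R A u) (b • D R A v) =
      (a * P u b) • D R A v + (b * P a v) • D R A u + (a * b) • D R A (P u v) := by
  rw [koszulBracket_apply, poissonAnchor_smul_D, poissonAnchor_smul_D,
    Derivation.lieDerivative_smul_D, Derivation.lieDerivative_smul_D, map_smul,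
    Derivation.liftKaehlerDifferential_comp_D]
  simp only [Derivation.smul_apply, hamiltonian_apply, smul_eq_mul, Derivation.leibniz,
    hP_antisymm v a, hP_antisymm v u, map_neg, mul_neg]
  module

end Poisson

theorem exists_koszul_bracket_general
    (R A : Type*) [CommRing R] [CommRing A] [Algebra R A]
    (P : A → A → A)
    (hP_add_left : ∀ u v w : A, P (u + v) w = P u w + P v w)
    (hP_smul_left : ∀ (r : R) (u v : A), P (r • u) v = r • P u v)
    (hP_add_right : ∀ u v w : A, P u (v + w) = P u v + P u w)
    (hP_smul_right : ∀ (r : R) (u v : A), P u (r • v) = r • P u v)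
    (hP_antisymm : ∀ u v : A, P u v = - P v u)
    (hP_leibniz : ∀ u a b : A, P u (a * b) = P u a * b + a * P u b) :
    ∃ B : KaehlerDifferential R A →ₗ[R] KaehlerDifferential R A →ₗ[R] KaehlerDifferential R A,
      ∀ a b u v : A,
        B (a • KaehlerDifferential.D R A u) (b • KaehlerDifferential.D R A v) =
          (a * P u b) • KaehlerDifferential.D R A v +
          (b * P a v) • KaehlerDifferential.D R A u +
          (a * b) • KaehlerDifferential.D R A (P u v) := by
  let bracket := LinearMap.mk₂ R P hP_add_left hP_smul_left hP_add_right hP_smul_right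
  exact ⟨koszulBracket (poissonAnchor bracket hP_leibniz hP_antisymm),
    koszulBracket_poissonAnchor_smul_D_smul_D bracket hP_leibniz hP_antisymm⟩

/-- There exists an `R`-bilinear map
`B : Ω[A⁄R] × Ω[A⁄R] → Ω[A⁄R]` satisfying
`B(a • D u, b • D v) = a{u,b} • D v + b{a,v} • D u + (ab) • D{u,v}`. -/
theorem exists_koszul_bracket
    (R A : Type*) [CommRing R] [CommRing A] [Algebra R A]
    (P : A → A → A)
    (hP_add_left : ∀ u v w : A, P (u + v) w = P u w + P v w)
    (hP_smul_left : ∀ (r : R) (u v : A), P (r • u) v = r • P u v)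
    (hP_add_right : ∀ u v w : A, P u (v + w) = P u v + P u w)
    (hP_smul_right : ∀ (r : R) (u v : A), P u (r • v) = r • P u v)
    (hP_antisymm : ∀ u v : A, P u v = - P v u)
    (hP_jacobi : ∀ u v w : A, P u (P v w) + P v (P w u) + P w (P u v) = 0)
    (hP_leibniz : ∀ u a b : A, P u (a * b) = P u a * b + a * P u b) :
    ∃ B : KaehlerDifferential R A →ₗ[R] KaehlerDifferential R A →ₗ[R] KaehlerDifferential R A,
      ∀ a b u v : A,
        B (a • KaehlerDifferential.D R A u) (b • KaehlerDifferential.D R A v) =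
          (a * P u b) • KaehlerDifferential.D R A v +
          (b * P a v) • KaehlerDifferential.D R A u +
          (a * b) • KaehlerDifferential.D R A (P u v) :=
  exists_koszul_bracket_general R A P hP_add_left hP_smul_left hP_add_right hP_smul_right
    hP_antisymm hP_leibniz
end

section
/- Let B : Ω[A⁄R] × Ω[A⁄R] → Ω[A⁄R] be an R-bilinear map satisfying B(a • D u, b • D v) = a{u, b} • D v + b{a, v} • D u + (ab) • D{u, v} for all a, b, u, v ∈ A, and let π♯ : Ω[A⁄R] → Der_R(A) be the unique A-linear map with π♯(D u) = {u, ·}. Then the Lie–Rinehart compatibility B(α, a • β) = (π♯ α)(a) • β + a • B(α, β) holds for all α, β ∈ Ω[A⁄R] and a ∈ A. -/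
/-- For `B` the Koszul bracket on Kähler differentials and `π♯` the
unique `A`-linear map with `π♯(D u) = {u, ·}`, the Lie–Rinehart compatibility
`B(α, a • β) = (π♯ α)(a) • β + a • B(α, β)` holds. -/
theorem koszul_bracket_lie_rinehart_compat
    (R A : Type*) [CommRing R] [CommRing A] [Algebra R A]
    (P : A → A → A)
    (hP_add_left : ∀ u v w : A, P (u + v) w = P u w + P v w)
    (hP_smul_left : ∀ (r : R) (u v : A), P (r • u) v = r • P u v)
    (hP_add_right : ∀ u v w : A, P u (v + w) = P u v + P u w)
    (hP_smul_right : ∀ (r : R) (u v : A), P u (r • v) = r • P u v)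
    (hP_antisymm : ∀ u v : A, P u v = - P v u)
    (hP_jacobi : ∀ u v w : A, P u (P v w) + P v (P w u) + P w (P u v) = 0)
    (hP_leibniz : ∀ u a b : A, P u (a * b) = P u a * b + a * P u b)
    (B : KaehlerDifferential R A →ₗ[R] KaehlerDifferential R A →ₗ[R] KaehlerDifferential R A)
    (hB : ∀ a b u v : A,
      B (a • KaehlerDifferential.D R A u) (b • KaehlerDifferential.D R A v) =
        (a * P u b) • KaehlerDifferential.D R A v +
        (b * P a v) • KaehlerDifferential.D R A u +
        (a * b) • KaehlerDifferential.D R A (P u v))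
    (sharp : KaehlerDifferential R A →ₗ[A] Derivation R A A)
    (hsharp : ∀ u v : A, sharp (KaehlerDifferential.D R A u) v = P u v) :
    ∀ (α β : KaehlerDifferential R A) (a : A),
      B α (a • β) = sharp α a • β + a • B α β := by
  set D := KaehlerDifferential.D R A with hD
  set S : Set (KaehlerDifferential R A) := {y | ∃ c u : A, y = c • D u} with hS
  -- every element lies in the R-span of S
  have hclosed : ∀ (c : A) (x : KaehlerDifferential R A), x ∈ Submodule.span R S →
      c • x ∈ Submodule.span R S := by
    intro c x hx
    refine Submodule.span_induction ?_ ?_ ?_ ?_ hx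
    · rintro y ⟨b, u, rfl⟩
      exact Submodule.subset_span ⟨c * b, u, (mul_smul c b (D u)).symm⟩
    · simp
    · intro y z _ _ hy hz
      rw [smul_add]; exact Submodule.add_mem _ hy hz
    · intro r y _ hy
      rw [smul_comm]; exact Submodule.smul_mem _ r hy
  have hgen : ∀ x : KaehlerDifferential R A, x ∈ Submodule.span R S := by
    intro x
    have hx : x ∈ Submodule.span A (Set.range D) := by
      rw [hD, KaehlerDifferential.span_range_derivation]; trivial
    refine Submodule.span_induction ?_ ?_ ?_ ?_ hx
    · rintro y ⟨u, rfl⟩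
      exact Submodule.subset_span ⟨1, u, (one_smul A (D u)).symm⟩
    · simp
    · intro y z _ _ hy hz; exact Submodule.add_mem _ hy hz
    · intro a y _ hy; exact hclosed a y hy
  have hcomm : ∀ (r : R) (c : A) (x : KaehlerDifferential R A), r • c • x = c • r • x := by
    intro r c x
    rw [← algebraMap_smul A r (c • x), smul_comm, algebraMap_smul]
  -- the generator case
  have key : ∀ (c u b v a : A),
      B (c • D u) (a • (b • D v)) =
        sharp (c • D u) a • (b • D v) + a • B (c • D u) (b • D v) := by
    intro c u b v a
    rw [smul_smul, hB, hB, map_smul, Derivation.smul_apply, hsharp, hP_leibniz, smul_eq_mul]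
    module
  intro α β a
  refine Submodule.span_induction (p := fun α _ => B α (a • β) = sharp α a • β + a • B α β)
    ?_ ?_ ?_ ?_ (hgen α)
  · rintro x ⟨c, u, rfl⟩
    refine Submodule.span_induction
      (p := fun β _ => B (c • D u) (a • β) = sharp (c • D u) a • β + a • B (c • D u) β)
      ?_ ?_ ?_ ?_ (hgen β)
    · rintro y ⟨b, v, rfl⟩
      exact key c u b v a
    · simp
    · intro y z _ _ hy hz
      rw [smul_add, map_add, hy, hz, map_add]
      module
    · intro r y _ hy
      rw [smul_comm a r, map_smul (B (c • D u)) r (a • y), hy,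
        map_smul (B (c • D u)) r y]
      rw [smul_add r ((sharp (c • D u)) a • y) (a • (B (c • D u)) y), hcomm, hcomm]
  · simp
  · intro x y _ _ hx hy
    rw [map_add, LinearMap.add_apply, hx, hy, map_add, Derivation.add_apply,
      LinearMap.add_apply, add_smul, smul_add]
    abel
  · intro r x _ hx
    rw [LinearMap.map_smul, LinearMap.smul_apply, LinearMap.smul_apply, hx,
      LinearMap.map_smul_of_tower, Derivation.smul_apply, smul_add, smul_assoc, hcomm r a]
end

section
/- Let B : Ω[A⁄R] × Ω[A⁄R] → Ω[A⁄R] be an R-bilinear map satisfying B(a • D u, b • D v) = a{u, b} • D v + b{a, v} • D u + (ab) • D{u, v} for all a, b, u, v ∈ A, and let π♯ : Ω[A⁄R] → Der_R(A) be the unique A-linear map with π♯(D u) = {u, ·}. Then π♯ is a morphism of Lie algebras: π♯(B(α, β)) = ⁅π♯ α, π♯ β⁆ (commutator of derivations) for all α, β ∈ Ω[A⁄R]. -/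
/-!
Both sides are `R`-bilinear in `(α, β)` and the forms `a • D u` span `Ω[A⁄R]` over `R`, so it
suffices to compare them on pairs `(a • D u, b • D v)`. Writing `X u = π♯ (D u) = {u, ·}`, the
Leibniz rule expands `⁅a • X u, b • X v⁆` into three terms, which match those of the defining
formula for `B` once `⁅X u, X v⁆ = X {u, v}`; the latter is the Jacobi identity.
-/

open KaehlerDifferential Pointwise

section
variable {R A : Type*} [CommRing R] [CommRing A] [Algebra R A]

theorem KaehlerDifferential.span_smul_range_D :
    Submodule.span R ((Set.univ : Set A) • Set.range (D R A)) = ⊤ := by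
  rw [Submodule.span_smul_of_span_eq_top Submodule.span_univ, span_range_derivation]
  rfl

theorem KaehlerDifferential.bilinear_ext_smul_D {M : Type*} [AddCommGroup M] [Module R M]
    {f g : Ω[A⁄R] →ₗ[R] Ω[A⁄R] →ₗ[R] M}
    (h : ∀ a b u v : A, f (a • D R A u) (b • D R A v) = g (a • D R A u) (b • D R A v)) :
    f = g := by
  refine LinearMap.ext_on span_smul_range_D ?_
  rintro _ ⟨a, -, _, ⟨u, rfl⟩, rfl⟩
  refine LinearMap.ext_on span_smul_range_D ?_
  rintro _ ⟨b, -, _, ⟨v, rfl⟩, rfl⟩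
  exact h a b u v

theorem Derivation.commutator_smul_smul (X Y : Derivation R A A) (a b : A) :
    ⁅a • X, b • Y⁆ = (a * X b) • Y - (b * Y a) • X + (a * b) • ⁅X, Y⁆ := by
  ext x
  simp only [Derivation.commutator_apply, Derivation.smul_apply, Derivation.add_apply,
    Derivation.sub_apply, smul_eq_mul, Derivation.leibniz]
  ring

theorem Derivation.commutator_eq_of_jacobi {P : A → A → A} (X : A → Derivation R A A)
    (hX : ∀ u v, X u v = P u v) (hP_antisymm : ∀ u v : A, P u v = - P v u)
    (hP_jacobi : ∀ u v w : A, P u (P v w) + P v (P w u) + P w (P u v) = 0) (u v : A) :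
    ⁅X u, X v⁆ = X (P u v) := by
  ext x
  have h := hP_jacobi u v x
  rw [hP_antisymm x u, hP_antisymm x (P u v), ← hX v (-P u x), map_neg, hX] at h
  simp only [Derivation.commutator_apply, hX]
  linear_combination h

end

theorem anchor_is_lie_morphism_general
    (R A : Type*) [CommRing R] [CommRing A] [Algebra R A]
    (P : A → A → A)
    (hP_antisymm : ∀ u v : A, P u v = - P v u)
    (hP_jacobi : ∀ u v w : A, P u (P v w) + P v (P w u) + P w (P u v) = 0)
    (B : KaehlerDifferential R A →ₗ[R] KaehlerDifferential R A →ₗ[R] KaehlerDifferential R A)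
    (hB : ∀ a b u v : A,
      B (a • KaehlerDifferential.D R A u) (b • KaehlerDifferential.D R A v) =
        (a * P u b) • KaehlerDifferential.D R A v +
        (b * P a v) • KaehlerDifferential.D R A u +
        (a * b) • KaehlerDifferential.D R A (P u v))
    (sharp : KaehlerDifferential R A →ₗ[A] Derivation R A A)
    (hsharp : ∀ u v : A, sharp (KaehlerDifferential.D R A u) v = P u v) :
    ∀ α β : KaehlerDifferential R A, sharp (B α β) = ⁅sharp α, sharp β⁆ := by
  have hbracket : ∀ u v, ⁅sharp (D R A u), sharp (D R A v)⁆ = sharp (D R A (P u v)) :=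
    Derivation.commutator_eq_of_jacobi (fun u => sharp (D R A u)) hsharp hP_antisymm hP_jacobi
  have hcomp : B.compr₂ (sharp.restrictScalars R) =
      (LieAlgebra.ad R (Derivation R A A) :
        Derivation R A A →ₗ[R] Module.End R (Derivation R A A)).compl₁₂
        (sharp.restrictScalars R) (sharp.restrictScalars R) := by
    refine bilinear_ext_smul_D fun a b u v => ?_
    simp only [LinearMap.compr₂_apply, LinearMap.compl₁₂_apply, LinearMap.coe_restrictScalars,
      LieAlgebra.ad_apply, LieHom.coe_toLinearMap, hB, map_add, map_smul,
      Derivation.commutator_smul_smul, hbracket, hsharp, hP_antisymm a v]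
    module
  exact fun α β => LinearMap.congr_fun₂ hcomp α β

/-- For `B` the Koszul bracket on Kähler differentials and `π♯` the
unique `A`-linear map with `π♯(D u) = {u, ·}`, the map `π♯` is a morphism of Lie
algebras: `π♯(B(α, β)) = ⁅π♯ α, π♯ β⁆`. -/
theorem anchor_is_lie_morphism
    (R A : Type*) [CommRing R] [CommRing A] [Algebra R A]
    (P : A → A → A)
    (hP_add_left : ∀ u v w : A, P (u + v) w = P u w + P v w)
    (hP_smul_left : ∀ (r : R) (u v : A), P (r • u) v = r • P u v)
    (hP_add_right : ∀ u v w : A, P u (v + w) = P u v + P u w)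
    (hP_smul_right : ∀ (r : R) (u v : A), P u (r • v) = r • P u v)
    (hP_antisymm : ∀ u v : A, P u v = - P v u)
    (hP_jacobi : ∀ u v w : A, P u (P v w) + P v (P w u) + P w (P u v) = 0)
    (hP_leibniz : ∀ u a b : A, P u (a * b) = P u a * b + a * P u b)
    (B : KaehlerDifferential R A →ₗ[R] KaehlerDifferential R A →ₗ[R] KaehlerDifferential R A)
    (hB : ∀ a b u v : A,
      B (a • KaehlerDifferential.D R A u) (b • KaehlerDifferential.D R A v) =
        (a * P u b) • KaehlerDifferential.D R A v +
        (b * P a v) • KaehlerDifferential.D R A u +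
        (a * b) • KaehlerDifferential.D R A (P u v))
    (sharp : KaehlerDifferential R A →ₗ[A] Derivation R A A)
    (hsharp : ∀ u v : A, sharp (KaehlerDifferential.D R A u) v = P u v) :
    ∀ α β : KaehlerDifferential R A, sharp (B α β) = ⁅sharp α, sharp β⁆ :=
  anchor_is_lie_morphism_general R A P hP_antisymm hP_jacobi B hB sharp hsharp
end

section
/- The Poisson 2-form π is a 2-cocycle in the Rinehart complex: for all α, β, γ ∈ Ω[A⁄R], (π♯ α)(π(β, γ)) − (π♯ β)(π(α, γ)) + (π♯ γ)(π(α, β)) − π(B(α, β), γ) + π(B(α, γ), β) − π(B(β, γ), α) = 0. -/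
/-- The Poisson 2-form `π` is a 2-cocycle in the Rinehart complex:
`(π♯α)(π(β,γ)) − (π♯β)(π(α,γ)) + (π♯γ)(π(α,β)) − π(B(α,β),γ) + π(B(α,γ),β) − π(B(β,γ),α) = 0`. -/
theorem poisson_two_form_is_cocycle
    (R A : Type*) [CommRing R] [CommRing A] [Algebra R A]
    (P : A → A → A)
    (hP_add_left : ∀ u v w : A, P (u + v) w = P u w + P v w)
    (hP_smul_left : ∀ (r : R) (u v : A), P (r • u) v = r • P u v)
    (hP_add_right : ∀ u v w : A, P u (v + w) = P u v + P u w)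
    (hP_smul_right : ∀ (r : R) (u v : A), P u (r • v) = r • P u v)
    (hP_antisymm : ∀ u v : A, P u v = - P v u)
    (hP_jacobi : ∀ u v w : A, P u (P v w) + P v (P w u) + P w (P u v) = 0)
    (hP_leibniz : ∀ u a b : A, P u (a * b) = P u a * b + a * P u b)
    (sharp : KaehlerDifferential R A →ₗ[A] Derivation R A A)
    (hsharp : ∀ u v : A, sharp (KaehlerDifferential.D R A u) v = P u v)
    (pi : KaehlerDifferential R A →ₗ[A] KaehlerDifferential R A →ₗ[A] A)
    (hpi : ∀ u v : A,
      pi (KaehlerDifferential.D R A u) (KaehlerDifferential.D R A v) = P u v)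
    (B : KaehlerDifferential R A →ₗ[R] KaehlerDifferential R A →ₗ[R] KaehlerDifferential R A)
    (hB : ∀ a b u v : A,
      B (a • KaehlerDifferential.D R A u) (b • KaehlerDifferential.D R A v) =
        (a * P u b) • KaehlerDifferential.D R A v +
        (b * P a v) • KaehlerDifferential.D R A u +
        (a * b) • KaehlerDifferential.D R A (P u v)) :
    ∀ α β γ : KaehlerDifferential R A,
      sharp α (pi β γ) - sharp β (pi α γ) + sharp γ (pi α β)
        - pi (B α β) γ + pi (B α γ) β - pi (B β γ) α = 0 := by
  set D := KaehlerDifferential.D R A with hD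
  -- auxiliary algebraic facts about the bracket
  have h0 : ∀ x : A, P x 0 = 0 := by
    intro x
    have h := hP_add_right x 0 0
    simp only [add_zero] at h
    linear_combination -h
  have hneg_right : ∀ x y : A, P x (-y) = -P x y := by
    intro x y
    have h := hP_add_right x y (-y)
    rw [add_neg_cancel, h0] at h
    linear_combination -h
  have hjac2 : ∀ u v w : A, P u (P v w) - P v (P u w) + P w (P u v) = 0 := by
    intro u v w
    have h := hP_jacobi u v w
    rw [hP_antisymm w u, hneg_right] at h
    linear_combination h
  have hswap : ∀ u v w : A, P (P u v) w = P u (P v w) - P v (P u w) := by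
    intro u v w
    rw [hP_antisymm (P u v) w]
    linear_combination -hjac2 u v w
  -- the expression
  set E : KaehlerDifferential R A → KaehlerDifferential R A → KaehlerDifferential R A → A :=
    fun x y z => sharp x (pi y z) - sharp y (pi x z) + sharp z (pi x y)
        - pi (B x y) z + pi (B x z) y - pi (B y z) x with hE
  -- linearity of E in each slot
  have hE1_add : ∀ x₁ x₂ y z, E (x₁ + x₂) y z = E x₁ y z + E x₂ y z := by
    intro x₁ x₂ y z
    simp only [hE, map_add, LinearMap.add_apply, Derivation.add_apply]
    ring
  have hE1_smul : ∀ (r : R) (x y z), E (r • x) y z = r • E x y z := by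
    intro r x y z
    simp only [hE, LinearMap.map_smul_of_tower, map_smul, LinearMap.smul_apply,
      Derivation.map_smul, Derivation.smul_apply]
    module
  have hE2_add : ∀ x y₁ y₂ z, E x (y₁ + y₂) z = E x y₁ z + E x y₂ z := by
    intro x y₁ y₂ z
    simp only [hE, map_add, LinearMap.add_apply, Derivation.add_apply]
    ring
  have hE2_smul : ∀ (r : R) (x y z), E x (r • y) z = r • E x y z := by
    intro r x y z
    simp only [hE, LinearMap.map_smul_of_tower, map_smul, LinearMap.smul_apply,
      Derivation.map_smul, Derivation.smul_apply]
    module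
  have hE3_add : ∀ x y z₁ z₂, E x y (z₁ + z₂) = E x y z₁ + E x y z₂ := by
    intro x y z₁ z₂
    simp only [hE, map_add, LinearMap.add_apply, Derivation.add_apply]
    ring
  have hE3_smul : ∀ (r : R) (x y z), E x y (r • z) = r • E x y z := by
    intro r x y z
    simp only [hE, LinearMap.map_smul_of_tower, map_smul, LinearMap.smul_apply,
      Derivation.map_smul, Derivation.smul_apply]
    module
  -- the generating set
  set S : Set (KaehlerDifferential R A) := {x | ∃ a u : A, x = a • D u} with hS
  have hclosed : ∀ (a : A) (x : KaehlerDifferential R A),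
      x ∈ Submodule.span R S → a • x ∈ Submodule.span R S := by
    intro a x hx
    induction hx using Submodule.span_induction with
    | mem y hy =>
      obtain ⟨b, u, rfl⟩ := hy
      exact Submodule.subset_span ⟨a * b, u, (mul_smul a b (D u)).symm⟩
    | zero => rw [smul_zero]; exact Submodule.zero_mem _
    | add y z _ _ hy hz => rw [smul_add]; exact Submodule.add_mem _ hy hz
    | smul r y _ hy => rw [smul_comm]; exact Submodule.smul_mem _ r hy
  have hspan : ∀ x : KaehlerDifferential R A, x ∈ Submodule.span R S := by
    intro x
    have hx : x ∈ Submodule.span A (Set.range D) := by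
      rw [hD, KaehlerDifferential.span_range_derivation]; trivial
    induction hx using Submodule.span_induction with
    | mem y hy =>
      obtain ⟨u, rfl⟩ := hy
      exact Submodule.subset_span ⟨1, u, (one_smul A (D u)).symm⟩
    | zero => exact Submodule.zero_mem _
    | add y z _ _ hy hz => exact Submodule.add_mem _ hy hz
    | smul a y _ hy => exact hclosed a y hy
  -- the base case: everything is a computation with the bracket
  have key : ∀ a u b v c w : A, E (a • D u) (b • D v) (c • D w) = 0 := by
    intro a u b v c w
    simp only [hE, map_smul, LinearMap.smul_apply, Derivation.smul_apply, hB, map_add,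
      LinearMap.add_apply, hsharp, hpi, smul_eq_mul]
    simp only [hP_leibniz]
    rw [hswap u v w, hswap u w v, hswap v w u]
    rw [hP_antisymm w v, hP_antisymm v a, hP_antisymm w a, hP_antisymm b w,
      hP_antisymm v u, hP_antisymm w u]
    simp only [hneg_right, mul_neg, neg_mul, neg_neg]
    linear_combination (-(a * b * c)) * hjac2 u v w
  -- extend by linearity
  intro α β γ
  show E α β γ = 0
  induction hspan α using Submodule.span_induction with
  | zero =>
    have : E 0 β γ + E 0 β γ = E 0 β γ + 0 := by
      rw [← hE1_add, add_zero, add_zero]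
    exact add_left_cancel this
  | add x y _ _ hx hy => rw [hE1_add, hx, hy, add_zero]
  | smul r x _ hx => rw [hE1_smul, hx, smul_zero]
  | mem x hx =>
  obtain ⟨a, u, rfl⟩ := hx
  induction hspan β using Submodule.span_induction with
  | zero =>
    have : E (a • D u) 0 γ + E (a • D u) 0 γ = E (a • D u) 0 γ + 0 := by
      rw [← hE2_add, add_zero, add_zero]
    exact add_left_cancel this
  | add x y _ _ hx hy => rw [hE2_add, hx, hy, add_zero]
  | smul r x _ hx => rw [hE2_smul, hx, smul_zero]
  | mem x hx =>
  obtain ⟨b, v, rfl⟩ := hx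
  induction hspan γ using Submodule.span_induction with
  | zero =>
    have : E (a • D u) (b • D v) 0 + E (a • D u) (b • D v) 0
        = E (a • D u) (b • D v) 0 + 0 := by
      rw [← hE3_add, add_zero, add_zero]
    exact add_left_cancel this
  | add x y _ _ hx hy => rw [hE3_add, hx, hy, add_zero]
  | smul r x _ hx => rw [hE3_smul, hx, smul_zero]
  | mem x hx =>
    obtain ⟨c, w, rfl⟩ := hx
    exact key a u b v c w
end

section
/- Let n ≥ 1, let q₀ ∈ ℝⁿ with q₀ ≠ 0, and let p ∈ ℝⁿ satisfy the zero angular momentum condition (q₀)ᵢ pⱼ = (q₀)ⱼ pᵢ for all i, j. Set c = 2 q₀·q₀, x₁ = q₀·q₀ − p·p, and x₂ = 2 q₀·p. Then x₂² + 2c·x₁ = c²; that is, under reduction the leaf q = q₀ of the vertical polarization passes to the parabola x₂² + 2c x₁ = c² in the (x₁, x₂)-plane. -/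
/-- For `q₀ ≠ 0` and `p` with zero angular momentum relative to `q₀`,
setting `c = 2 q₀·q₀`, `x₁ = q₀·q₀ − p·p`, `x₂ = 2 q₀·p`, the point `(x₁, x₂)` lies
on the parabola `x₂² + 2c·x₁ = c²` (Remark 6.3). -/
theorem leaf_reduces_to_parabola (n : ℕ) (hn : 1 ≤ n) (q₀ p : Fin n → ℝ)
    (hq₀ : q₀ ≠ 0)
    (hzero : ∀ i j : Fin n, q₀ i * p j = q₀ j * p i) :
    (2 * ∑ i, q₀ i * p i) ^ 2 +
        2 * (2 * ∑ i, q₀ i * q₀ i) * ((∑ i, q₀ i * q₀ i) - ∑ i, p i * p i) =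
      (2 * ∑ i, q₀ i * q₀ i) ^ 2 := by
  have key : (∑ i, q₀ i * p i) ^ 2 = (∑ i, q₀ i * q₀ i) * (∑ i, p i * p i) := by
    rw [sq, Finset.sum_mul_sum, Finset.sum_mul_sum]
    refine Finset.sum_congr rfl fun i _ => Finset.sum_congr rfl fun j _ => ?_
    linear_combination q₀ i * p j * (hzero j i)
  linear_combination (4 : ℝ) * key
end
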